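/- arXiv:2012.06392 — 6 statements merged into one kernel-verified Lean document; each statement's English description precedes it below -/
import Mathlib

section
/- Let $\ell^0_1 \le \dots \le \ell^0_T$ be nonnegative reals, $L \ge 0$, and $t_0 \in \{1,\dots,T\}$ such that $\Delta_{t_0} < L \le \Delta_{t_0+1}$ where $\Delta_t = t\,\ell^0_t - \sum_{s \le t}\ell^0_s$ (with $\Delta_{T+1}=+\infty$). Define $\ell^*_t = (L + \sum_{s\le t_0}\ell^0_s)/t_0 - \ell^0_t$ for $t \le t_0$ and $\ell^*_t = 0$ for $t > t_0$. Then $\ell^*_t \ge 0$ for all $t$ and $\sum_{t=1}^T \ell^*_t = L$, i.e., the water-filling profile is feasible. -/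
/-! Sortedness gives `ℓ0 t ≤ ℓ0 t0` for `t ≤ t0`, and `Δ t0 < L` says exactly that `ℓ0 t0` lies below
the water level `(L + ∑_{s ≤ t0} ℓ0 s) / t0`; hence `ℓ*` is nonnegative. The level is chosen so that
the `t0` gaps to it add up to `L`, and `ℓ*` vanishes past `t0`. -/

lemma le_div_of_mul_sub_lt {n : ℕ} (hn : 0 < n) {x S L : ℝ} (h : n * x - S < L) :
    x ≤ (L + S) / n := by
  rw [le_div_iff₀ (by exact_mod_cast hn)]
  linarith

lemma sum_Icc_waterLevel_sub {n : ℕ} (hn : 0 < n) (L : ℝ) (f : ℕ → ℝ) :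
    ∑ t ∈ Finset.Icc 1 n, ((L + ∑ s ∈ Finset.Icc 1 n, f s) / n - f t) = L := by
  have hn' : (n : ℝ) ≠ 0 := by exact_mod_cast hn.ne'
  rw [Finset.sum_sub_distrib, Finset.sum_const, Nat.card_Icc, Nat.add_sub_cancel, nsmul_eq_mul,
    mul_div_cancel₀ _ hn', add_sub_cancel_right]

lemma sum_Icc_one_eq_of_eq_zero_of_lt {m n : ℕ} (hmn : m ≤ n) {f : ℕ → ℝ}
    (hf : ∀ t, m < t → f t = 0) :
    ∑ t ∈ Finset.Icc 1 n, f t = ∑ t ∈ Finset.Icc 1 m, f t := by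
  refine (Finset.sum_subset (Finset.Icc_subset_Icc_right hmn) fun t ht htm => hf t ?_).symm
  simp only [Finset.mem_Icc, not_and, not_le] at ht htm
  exact htm ht.1

theorem waterfilling_profile_feasible_general
    (T : ℕ) (ℓ0 : ℕ → ℝ)
    (hsorted : ∀ s t, 1 ≤ s → s ≤ t → t ≤ T → ℓ0 s ≤ ℓ0 t)
    (Δ : ℕ → ℝ)
    (hΔ : ∀ t, 1 ≤ t → t ≤ T →
      Δ t = t * ℓ0 t - ∑ s ∈ Finset.Icc 1 t, ℓ0 s)
    (L : ℝ)
    (t0 : ℕ) (ht0a : 1 ≤ t0) (ht0b : t0 ≤ T)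
    (hlow : Δ t0 < L)
    (ℓstar : ℕ → ℝ)
    (hℓstar_used : ∀ t, 1 ≤ t → t ≤ t0 →
      ℓstar t = (L + ∑ s ∈ Finset.Icc 1 t0, ℓ0 s) / t0 - ℓ0 t)
    (hℓstar_unused : ∀ t, t0 < t → ℓstar t = 0) :
    (∀ t, 1 ≤ t → t ≤ T → 0 ≤ ℓstar t) ∧
      ∑ t ∈ Finset.Icc 1 T, ℓstar t = L := by
  have hlevel : ℓ0 t0 ≤ (L + ∑ s ∈ Finset.Icc 1 t0, ℓ0 s) / t0 :=
    le_div_of_mul_sub_lt ht0a (hΔ t0 ht0a ht0b ▸ hlow)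
  refine ⟨fun t ht1 _ => ?_, ?_⟩
  · rcases le_or_gt t t0 with htt0 | ht0t
    · rw [hℓstar_used t ht1 htt0, sub_nonneg]
      exact (hsorted t t0 ht1 htt0 ht0b).trans hlevel
    · exact (hℓstar_unused t ht0t).ge
  · rw [sum_Icc_one_eq_of_eq_zero_of_lt ht0b hℓstar_unused,
      Finset.sum_congr rfl fun t ht => hℓstar_used t (Finset.mem_Icc.1 ht).1 (Finset.mem_Icc.1 ht).2]
    exact sum_Icc_waterLevel_sub ht0a L ℓ0

/-- The water-filling profile is feasible: it is nonnegative
and its total equals the charging need `L`. -/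
theorem waterfilling_profile_feasible
    (T : ℕ) (hT : 1 ≤ T) (ℓ0 : ℕ → ℝ)
    (hnonneg : ∀ t, 1 ≤ t → t ≤ T → 0 ≤ ℓ0 t)
    (hsorted : ∀ s t, 1 ≤ s → s ≤ t → t ≤ T → ℓ0 s ≤ ℓ0 t)
    (Δ : ℕ → ℝ)
    (hΔ : ∀ t, 1 ≤ t → t ≤ T →
      Δ t = t * ℓ0 t - ∑ s ∈ Finset.Icc 1 t, ℓ0 s)
    (L : ℝ) (hL : 0 ≤ L)
    (t0 : ℕ) (ht0a : 1 ≤ t0) (ht0b : t0 ≤ T)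
    (hlow : Δ t0 < L) (hhigh : t0 < T → L ≤ Δ (t0 + 1))
    (ℓstar : ℕ → ℝ)
    (hℓstar_used : ∀ t, 1 ≤ t → t ≤ t0 →
      ℓstar t = (L + ∑ s ∈ Finset.Icc 1 t0, ℓ0 s) / t0 - ℓ0 t)
    (hℓstar_unused : ∀ t, t0 < t → ℓstar t = 0) :
    (∀ t, 1 ≤ t → t ≤ T → 0 ≤ ℓstar t) ∧
      ∑ t ∈ Finset.Icc 1 T, ℓstar t = L :=
  waterfilling_profile_feasible_general T ℓ0 hsorted Δ hΔ L t0 ht0a ht0b hlow ℓstar hℓstar_used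
    hℓstar_unused
end

section
/- Let $\ell^0_1 \le \dots \le \ell^0_T$ be nonnegative reals, $L \ge 0$, and $t_0$ with $\Delta_{t_0} < L \le \Delta_{t_0+1}$ as in the water-filling setup. The profile $\ell^*$ defined by $\ell^*_t = (L + \sum_{s\le t_0}\ell^0_s)/t_0 - \ell^0_t$ for $t \le t_0$ and $\ell^*_t = 0$ otherwise is the unique minimizer of $\sum_{t=1}^T (\ell_t + \ell^0_t)^2$ over nonnegative profiles $(\ell_t)$ satisfying $\sum_t \ell_t = L$. -/
/-!
Write `w` for the water level `(L + ∑_{s ≤ t₀} ℓ⁰_s) / t₀`, so that `ℓ*_t + ℓ⁰_t = w` on the used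
slots. For any profile `ℓ` with the same total,
`∑ (ℓ + ℓ⁰)² = ∑ (ℓ* + ℓ⁰)² + ∑ (ℓ - ℓ*)² + 2 ∑ (ℓ* + ℓ⁰ - w)(ℓ - ℓ*)`,
and every term of the last sum is nonnegative: it vanishes on the used slots, and on the unused
ones it is `(ℓ⁰_t - w) ℓ_t` with `ℓ⁰_t ≥ ℓ⁰_{t₀+1} ≥ w` by `L ≤ Δ_{t₀+1}`. Hence `ℓ*` is optimal,
and any other optimal profile has `∑ (ℓ - ℓ*)² = 0`.
-/

open Finset

section KKT

variable {ι : Type*} {s : Finset ι} {x y c : ι → ℝ} {w : ℝ}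

theorem sum_sq_add_add_sum_sq_sub_le (hsum : ∑ i ∈ s, y i = ∑ i ∈ s, x i)
    (hkkt : ∀ i ∈ s, 0 ≤ (x i + c i - w) * (y i - x i)) :
    ∑ i ∈ s, (x i + c i) ^ 2 + ∑ i ∈ s, (y i - x i) ^ 2 ≤ ∑ i ∈ s, (y i + c i) ^ 2 := by
  have hmoved : ∑ i ∈ s, w * (y i - x i) = 0 := by
    rw [← mul_sum, sum_sub_distrib, hsum, sub_self, mul_zero]
  have hcross : 0 ≤ ∑ i ∈ s, (x i + c i) * (y i - x i) := by
    calc 0 ≤ ∑ i ∈ s, (x i + c i - w) * (y i - x i) := sum_nonneg hkkt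
      _ = ∑ i ∈ s, (x i + c i) * (y i - x i) - ∑ i ∈ s, w * (y i - x i) := by
        rw [← sum_sub_distrib]; exact sum_congr rfl fun i _ => by ring
      _ = ∑ i ∈ s, (x i + c i) * (y i - x i) := by rw [hmoved, sub_zero]
  have hexpand : ∑ i ∈ s, (y i + c i) ^ 2 = ∑ i ∈ s, (x i + c i) ^ 2
      + ∑ i ∈ s, (y i - x i) ^ 2 + 2 * ∑ i ∈ s, (x i + c i) * (y i - x i) := by
    rw [mul_sum, ← sum_add_distrib, ← sum_add_distrib]
    exact sum_congr rfl fun i _ => by ring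
  linarith

theorem sum_sq_add_le_of_kkt (hsum : ∑ i ∈ s, y i = ∑ i ∈ s, x i)
    (hkkt : ∀ i ∈ s, 0 ≤ (x i + c i - w) * (y i - x i)) :
    ∑ i ∈ s, (x i + c i) ^ 2 ≤ ∑ i ∈ s, (y i + c i) ^ 2 := by
  linarith [sum_sq_add_add_sum_sq_sub_le hsum hkkt,
    sum_nonneg fun i (_ : i ∈ s) => sq_nonneg (y i - x i)]

theorem eq_of_sum_sq_add_eq_of_kkt (hsum : ∑ i ∈ s, y i = ∑ i ∈ s, x i)
    (hkkt : ∀ i ∈ s, 0 ≤ (x i + c i - w) * (y i - x i))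
    (heq : ∑ i ∈ s, (y i + c i) ^ 2 = ∑ i ∈ s, (x i + c i) ^ 2) :
    ∀ i ∈ s, y i = x i := by
  have hzero : ∑ i ∈ s, (y i - x i) ^ 2 = 0 :=
    le_antisymm (by linarith [sum_sq_add_add_sum_sq_sub_le hsum hkkt])
      (sum_nonneg fun i _ => sq_nonneg _)
  intro i hi
  have := (sum_eq_zero_iff_of_nonneg fun j _ => sq_nonneg (y j - x j)).mp hzero i hi
  exact sub_eq_zero.mp (pow_eq_zero_iff two_ne_zero |>.mp this)

end KKT

section WaterLevel

variable {ℓ0 : ℕ → ℝ} {L : ℝ} {t0 : ℕ}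

noncomputable def waterLevel (ℓ0 : ℕ → ℝ) (L : ℝ) (t0 : ℕ) : ℝ :=
  (L + ∑ s ∈ Icc 1 t0, ℓ0 s) / t0

theorem sum_waterLevel_sub (ht0 : 0 < t0) :
    ∑ s ∈ Icc 1 t0, (waterLevel ℓ0 L t0 - ℓ0 s) = L := by
  have ht0' : (t0 : ℝ) ≠ 0 := by positivity
  rw [sum_sub_distrib, sum_const, Nat.card_Icc, Nat.add_sub_cancel, nsmul_eq_mul, waterLevel,
    mul_div_cancel₀ _ ht0', add_sub_cancel_right]

theorem waterLevel_le_succ (ht0 : 0 < t0)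
    (hL : L ≤ ((t0 + 1 : ℕ) : ℝ) * ℓ0 (t0 + 1) - ∑ s ∈ Icc 1 (t0 + 1), ℓ0 s) :
    waterLevel ℓ0 L t0 ≤ ℓ0 (t0 + 1) := by
  rw [sum_Icc_succ_top (by omega), Nat.cast_succ] at hL
  rw [waterLevel, div_le_iff₀ (by positivity)]
  linarith

end WaterLevel

theorem waterfilling_profile_unique_minimizer_general
    (T : ℕ) (ℓ0 : ℕ → ℝ)
    (hsorted : ∀ s t, 1 ≤ s → s ≤ t → t ≤ T → ℓ0 s ≤ ℓ0 t)
    (Δ : ℕ → ℝ)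
    (hΔ : ∀ t, 1 ≤ t → t ≤ T →
      Δ t = t * ℓ0 t - ∑ s ∈ Finset.Icc 1 t, ℓ0 s)
    (L : ℝ)
    (t0 : ℕ) (ht0a : 1 ≤ t0) (ht0b : t0 ≤ T)
    (hhigh : t0 < T → L ≤ Δ (t0 + 1))
    (ℓstar : ℕ → ℝ)
    (hℓstar_used : ∀ t, 1 ≤ t → t ≤ t0 →
      ℓstar t = (L + ∑ s ∈ Finset.Icc 1 t0, ℓ0 s) / t0 - ℓ0 t)
    (hℓstar_unused : ∀ t, t0 < t → ℓstar t = 0) :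
    (∀ ℓ : ℕ → ℝ, (∀ t, 1 ≤ t → t ≤ T → 0 ≤ ℓ t) →
        (∑ t ∈ Finset.Icc 1 T, ℓ t = L) →
        ∑ t ∈ Finset.Icc 1 T, (ℓstar t + ℓ0 t) ^ 2 ≤
          ∑ t ∈ Finset.Icc 1 T, (ℓ t + ℓ0 t) ^ 2) ∧
    (∀ ℓ : ℕ → ℝ, (∀ t, 1 ≤ t → t ≤ T → 0 ≤ ℓ t) →
        (∑ t ∈ Finset.Icc 1 T, ℓ t = L) →
        (∑ t ∈ Finset.Icc 1 T, (ℓ t + ℓ0 t) ^ 2 =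
          ∑ t ∈ Finset.Icc 1 T, (ℓstar t + ℓ0 t) ^ 2) →
        ∀ t, 1 ≤ t → t ≤ T → ℓ t = ℓstar t) := by
  have hlevel : ∀ t, t0 < t → t ≤ T → waterLevel ℓ0 L t0 ≤ ℓ0 t := fun t hlt hle =>
    (waterLevel_le_succ ht0a (hΔ (t0 + 1) (by omega) (by omega) ▸ hhigh (by omega))).trans
      (hsorted _ _ (by omega) hlt hle)
  have hsum_star : ∑ t ∈ Icc 1 T, ℓstar t = L := by
    rw [← sum_subset (Icc_subset_Icc_right ht0b) fun t ht hnot =>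
        hℓstar_unused t (by rw [mem_Icc] at ht hnot; omega),
      ← sum_waterLevel_sub (ℓ0 := ℓ0) (L := L) ht0a]
    exact sum_congr rfl fun t ht => hℓstar_used t (mem_Icc.mp ht).1 (mem_Icc.mp ht).2
  have hkkt : ∀ ℓ : ℕ → ℝ, (∀ t, 1 ≤ t → t ≤ T → 0 ≤ ℓ t) → ∀ t ∈ Icc 1 T,
      0 ≤ (ℓstar t + ℓ0 t - waterLevel ℓ0 L t0) * (ℓ t - ℓstar t) := by
    intro ℓ hpos t ht
    obtain ⟨h1t, htT⟩ := mem_Icc.mp ht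
    rcases le_or_gt t t0 with hused | hunused
    · rw [hℓstar_used t h1t hused, waterLevel, sub_add_cancel, sub_self, zero_mul]
    · rw [hℓstar_unused t hunused, zero_add, sub_zero]
      exact mul_nonneg (sub_nonneg.mpr (hlevel t hunused htT)) (hpos t h1t htT)
  refine ⟨fun ℓ hpos hsum => ?_, fun ℓ hpos hsum heq t h1t htT => ?_⟩
  · exact sum_sq_add_le_of_kkt (hsum.trans hsum_star.symm) (hkkt ℓ hpos)
  · exact eq_of_sum_sq_add_eq_of_kkt (hsum.trans hsum_star.symm) (hkkt ℓ hpos) heq t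
      (mem_Icc.mpr ⟨h1t, htT⟩)

/-- The water-filling profile is the unique minimizer of
`∑ t (ℓ t + ℓ0 t)^2` over nonnegative profiles summing to `L`. -/
theorem waterfilling_profile_unique_minimizer
    (T : ℕ) (hT : 1 ≤ T) (ℓ0 : ℕ → ℝ)
    (hnonneg : ∀ t, 1 ≤ t → t ≤ T → 0 ≤ ℓ0 t)
    (hsorted : ∀ s t, 1 ≤ s → s ≤ t → t ≤ T → ℓ0 s ≤ ℓ0 t)
    (Δ : ℕ → ℝ)
    (hΔ : ∀ t, 1 ≤ t → t ≤ T →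
      Δ t = t * ℓ0 t - ∑ s ∈ Finset.Icc 1 t, ℓ0 s)
    (L : ℝ) (hL : 0 ≤ L)
    (t0 : ℕ) (ht0a : 1 ≤ t0) (ht0b : t0 ≤ T)
    (hlow : Δ t0 < L) (hhigh : t0 < T → L ≤ Δ (t0 + 1))
    (ℓstar : ℕ → ℝ)
    (hℓstar_used : ∀ t, 1 ≤ t → t ≤ t0 →
      ℓstar t = (L + ∑ s ∈ Finset.Icc 1 t0, ℓ0 s) / t0 - ℓ0 t)
    (hℓstar_unused : ∀ t, t0 < t → ℓstar t = 0) :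
    (∀ ℓ : ℕ → ℝ, (∀ t, 1 ≤ t → t ≤ T → 0 ≤ ℓ t) →
        (∑ t ∈ Finset.Icc 1 T, ℓ t = L) →
        ∑ t ∈ Finset.Icc 1 T, (ℓstar t + ℓ0 t) ^ 2 ≤
          ∑ t ∈ Finset.Icc 1 T, (ℓ t + ℓ0 t) ^ 2) ∧
    (∀ ℓ : ℕ → ℝ, (∀ t, 1 ≤ t → t ≤ T → 0 ≤ ℓ t) →
        (∑ t ∈ Finset.Icc 1 T, ℓ t = L) →
        (∑ t ∈ Finset.Icc 1 T, (ℓ t + ℓ0 t) ^ 2 =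
          ∑ t ∈ Finset.Icc 1 T, (ℓstar t + ℓ0 t) ^ 2) →
        ∀ t, 1 ≤ t → t ≤ T → ℓ t = ℓstar t) :=
  waterfilling_profile_unique_minimizer_general T ℓ0 hsorted Δ hΔ L t0 ht0a ht0b hhigh ℓstar
    hℓstar_used hℓstar_unused
end

section
/- For any $\alpha > 0$, the locational marginal price function $\lambda^\alpha(L) = 2\alpha\,(L + \sum_{s \le t_0(L)} \ell^0_s)/t_0(L)$, where $t_0(L)$ is the integer with $\Delta_{t_0} < L \le \Delta_{t_0+1}$, is continuous on $(0, \infty)$. -/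
/-- For any `α > 0`, the locational marginal price
`λ^α(L) = 2α (L + ∑_{s ≤ t0(L)} ℓ0 s) / t0(L)` is continuous on `(0, ∞)`. -/
theorem lmp_continuous
    (T : ℕ) (hT : 1 ≤ T) (ℓ0 : ℕ → ℝ)
    (hnonneg : ∀ t, 1 ≤ t → t ≤ T → 0 ≤ ℓ0 t)
    (hsorted : ∀ s t, 1 ≤ s → s ≤ t → t ≤ T → ℓ0 s ≤ ℓ0 t)
    (Δ : ℕ → ℝ)
    (hΔ : ∀ t, 1 ≤ t → t ≤ T →
      Δ t = t * ℓ0 t - ∑ s ∈ Finset.Icc 1 t, ℓ0 s)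
    (t0 : ℝ → ℕ)
    (ht0 : ∀ L : ℝ, 0 < L → 1 ≤ t0 L ∧ t0 L ≤ T ∧ Δ (t0 L) < L ∧
      (t0 L < T → L ≤ Δ (t0 L + 1)))
    (α : ℝ) (hα : 0 < α)
    (lam : ℝ → ℝ)
    (hlam : ∀ L : ℝ, 0 < L →
      lam L = 2 * α * (L + ∑ s ∈ Finset.Icc 1 (t0 L), ℓ0 s) / (t0 L)) :
    ContinuousOn lam (Set.Ioi 0) := by
  set S : ℕ → ℝ := fun t => ∑ s ∈ Finset.Icc 1 t, ℓ0 s with hS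
  set g : ℕ → ℝ → ℝ := fun t L => (L + S t) / t with hg
  have hne : (Finset.Icc 1 T).Nonempty := ⟨1, by simp [hT]⟩
  -- sum recursion
  have hSucc : ∀ t : ℕ, 1 ≤ t → S (t + 1) = S t + ℓ0 (t + 1) := by
    intro t ht
    simpa [hS] using Finset.sum_Icc_succ_top (by omega : 1 ≤ t + 1) ℓ0
  -- Δ (t+1) = t * ℓ0 (t+1) - S t
  have hΔsucc : ∀ t : ℕ, 1 ≤ t → t + 1 ≤ T → Δ (t + 1) = t * ℓ0 (t + 1) - S t := by
    intro t ht htT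
    have h := hSucc t ht
    rw [hΔ (t + 1) (by omega) htT]
    simp only [hS] at h ⊢
    rw [h]
    push_cast
    ring
  -- Δ monotone
  have hΔmono : ∀ a b : ℕ, 1 ≤ a → a ≤ b → b ≤ T → Δ a ≤ Δ b := by
    intro a b ha hab hbT
    induction b with
    | zero => omega
    | succ n ih =>
      rcases Nat.lt_or_ge a (n + 1) with h | h
      · have han : a ≤ n := by omega
        have h1 : 1 ≤ n := by omega
        refine (ih han (by omega)).trans ?_
        rw [hΔsucc n h1 hbT, hΔ n h1 (by omega)]
        have hle : ℓ0 n ≤ ℓ0 (n + 1) := hsorted n (n + 1) h1 (by omega) hbT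
        have : (n : ℝ) * ℓ0 n ≤ (n : ℝ) * ℓ0 (n + 1) := by
          apply mul_le_mul_of_nonneg_left hle (by positivity)
        simp only [hS]
        linarith
      · have : a = n + 1 := by omega
        subst this
        exact le_refl _
  -- step inequalities
  have hstep_up : ∀ (t : ℕ) (L : ℝ), 1 ≤ t → t + 1 ≤ T → L ≤ Δ (t + 1) →
      g t L ≤ g (t + 1) L := by
    intro t L ht htT hL
    rw [hΔsucc t ht htT] at hL
    simp only [hg]
    rw [div_le_div_iff₀ (by positivity) (by positivity)]
    rw [hSucc t ht]
    push_cast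
    nlinarith [hL]
  have hstep_down : ∀ (t : ℕ) (L : ℝ), 1 ≤ t → t + 1 ≤ T → Δ (t + 1) ≤ L →
      g (t + 1) L ≤ g t L := by
    intro t L ht htT hL
    rw [hΔsucc t ht htT] at hL
    simp only [hg]
    rw [div_le_div_iff₀ (by positivity) (by positivity)]
    rw [hSucc t ht]
    push_cast
    nlinarith [hL]
  -- lam equals 2α * inf'
  have key : ∀ L ∈ Set.Ioi (0 : ℝ),
      lam L = 2 * α * (Finset.Icc 1 T).inf' hne (fun t => g t L) := by
    intro L hL
    have hL' : 0 < L := hL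
    obtain ⟨h1, h2, h3, h4⟩ := ht0 L hL'
    have hmin : ∀ t ∈ Finset.Icc 1 T, g (t0 L) L ≤ g t L := by
      intro t htmem
      simp only [Finset.mem_Icc] at htmem
      obtain ⟨ht1, htT⟩ := htmem
      rcases le_or_gt (t0 L) t with hcase | hcase
      · -- t ≥ t0 L : ascending induction
        induction t with
        | zero => omega
        | succ n ih =>
          rcases Nat.lt_or_ge (t0 L) (n + 1) with h | h
          · have hn1 : 1 ≤ n := by omega
            have : g (t0 L) L ≤ g n L := ih (by omega) (by omega) (by omega)
            refine this.trans (hstep_up n L hn1 htT ?_)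
            have hLle : L ≤ Δ (t0 L + 1) := h4 (by omega)
            exact hLle.trans (hΔmono (t0 L + 1) (n + 1) (by omega) (by omega) htT)
          · have : t0 L = n + 1 := by omega
            rw [this]
      · -- t < t0 L : descending, via aux on the gap
        have aux : ∀ d u : ℕ, u + d = t0 L → 1 ≤ u → g (t0 L) L ≤ g u L := by
          intro d
          induction d with
          | zero => intro u hu _; rw [← hu]; simp
          | succ d ih =>
            intro u hu hu1
            have h5 : g (t0 L) L ≤ g (u + 1) L := ih (u + 1) (by omega) (by omega)
            refine h5.trans (hstep_down u L hu1 (by omega) ?_)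
            exact le_of_lt (lt_of_le_of_lt (hΔmono (u + 1) (t0 L) (by omega) (by omega) h2) h3)
        exact aux (t0 L - t) t (by omega) ht1
    have hinf : (Finset.Icc 1 T).inf' hne (fun t => g t L) = g (t0 L) L := by
      apply le_antisymm
      · exact Finset.inf'_le _ (Finset.mem_Icc.mpr ⟨h1, h2⟩)
      · exact Finset.le_inf' _ _ hmin
    rw [hlam L hL', hinf]
    simp only [hg, hS]
    ring
  refine ContinuousOn.congr ?_ key
  apply Continuous.continuousOn
  apply Continuous.mul continuous_const
  apply Continuous.finset_inf'_apply hne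
  intro t htmem
  simp only [Finset.mem_Icc] at htmem
  have : (0:ℝ) < t := by exact_mod_cast htmem.1
  exact (continuous_id.add continuous_const).div_const _
end

section
/- For any $\alpha > 0$, the locational marginal price function $\lambda^\alpha(L) = 2\alpha\,(L + \sum_{s\le t_0(L)}\ell^0_s)/t_0(L)$ is strictly increasing in $L$ on $(0,\infty)$. -/
/-- For any `α > 0`, the locational marginal price
`λ^α(L) = 2α (L + ∑_{s ≤ t0(L)} ℓ0 s) / t0(L)` is strictly increasing on `(0, ∞)`. -/
theorem lmp_strictMono
    (T : ℕ) (hT : 1 ≤ T) (ℓ0 : ℕ → ℝ)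
    (hnonneg : ∀ t, 1 ≤ t → t ≤ T → 0 ≤ ℓ0 t)
    (hsorted : ∀ s t, 1 ≤ s → s ≤ t → t ≤ T → ℓ0 s ≤ ℓ0 t)
    (Δ : ℕ → ℝ)
    (hΔ : ∀ t, 1 ≤ t → t ≤ T →
      Δ t = t * ℓ0 t - ∑ s ∈ Finset.Icc 1 t, ℓ0 s)
    (t0 : ℝ → ℕ)
    (ht0 : ∀ L : ℝ, 0 < L → 1 ≤ t0 L ∧ t0 L ≤ T ∧ Δ (t0 L) < L ∧
      (t0 L < T → L ≤ Δ (t0 L + 1)))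
    (α : ℝ) (hα : 0 < α)
    (lam : ℝ → ℝ)
    (hlam : ∀ L : ℝ, 0 < L →
      lam L = 2 * α * (L + ∑ s ∈ Finset.Icc 1 (t0 L), ℓ0 s) / (t0 L)) :
    ∀ L1 L2 : ℝ, 0 < L1 → L1 < L2 → lam L1 < lam L2 := by
  intro L1 L2 hL1 hlt
  have hL2 : 0 < L2 := hL1.trans hlt
  obtain ⟨h11, h1T, hΔ1, hU1⟩ := ht0 L1 hL1
  obtain ⟨h21, h2T, hΔ2, hU2⟩ := ht0 L2 hL2
  set t1 := t0 L1 with ht1def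
  set t2 := t0 L2 with ht2def
  have hS : ∀ t : ℕ, 1 ≤ t + 1 → (∑ s ∈ Finset.Icc 1 (t+1), ℓ0 s)
      = (∑ s ∈ Finset.Icc 1 t, ℓ0 s) + ℓ0 (t+1) := by
    intro t ht
    rw [Finset.sum_Icc_succ_top (by omega)]
  have hΔstep : ∀ t : ℕ, 1 ≤ t → t + 1 ≤ T → Δ t ≤ Δ (t+1) := by
    intro t h1 h2
    rw [hΔ t h1 (by omega), hΔ (t+1) (by omega) h2, hS t (by omega)]
    have hl := hsorted t (t+1) h1 (by omega) h2
    have hc : (1:ℝ) ≤ (t:ℝ) := by exact_mod_cast h1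
    push_cast
    nlinarith
  have hΔmono : ∀ a b : ℕ, 1 ≤ a → a ≤ b → b ≤ T → Δ a ≤ Δ b := by
    intro a b ha hab hb
    induction b with
    | zero => omega
    | succ n ih =>
      rcases Nat.lt_or_ge a (n+1) with h | h
      · exact (ih (by omega) (by omega)).trans (hΔstep n (by omega) hb)
      · have : a = n + 1 := by omega
        rw [this]
  have ht12 : t1 ≤ t2 := by
    by_contra h
    push_neg at h
    have h2T' : t2 < T := lt_of_lt_of_le h h1T
    have hu := hU2 h2T'
    have hmb : Δ (t2+1) ≤ Δ t1 := hΔmono (t2+1) t1 (by omega) (by omega) h1T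
    linarith
  set f : ℕ → ℝ := fun t => 2 * α * (L1 + ∑ s ∈ Finset.Icc 1 t, ℓ0 s) / (t : ℝ) with hf
  -- chain: f t1 ≤ f t for t1 ≤ t ≤ t2
  have hchain : ∀ t : ℕ, t1 ≤ t → t ≤ t2 → f t1 ≤ f t := by
    intro t
    induction t with
    | zero => intro h _; omega
    | succ n ih =>
      intro hlo hhi
      rcases Nat.lt_or_ge n t1 with h | h
      · have : t1 = n + 1 := by omega
        rw [this]
      · have hstep : f n ≤ f (n+1) := by
          -- need L1 ≤ Δ (n+1)
          have h1ltT : t1 < T := by omega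
          have hL1Δ : L1 ≤ Δ (n+1) := by
            have := hU1 h1ltT
            have hm : Δ (t1+1) ≤ Δ (n+1) := hΔmono (t1+1) (n+1) (by omega) (by omega) (by omega)
            linarith
          have hn1 : (1:ℝ) ≤ (n:ℝ) := by exact_mod_cast (show 1 ≤ n by omega)
          have hΔval : Δ (n+1) = ((n:ℝ)+1) * ℓ0 (n+1)
              - ((∑ s ∈ Finset.Icc 1 n, ℓ0 s) + ℓ0 (n+1)) := by
            rw [hΔ (n+1) (by omega) (by omega), hS n (by omega)]
            push_cast; ring
          simp only [hf]
          rw [hS n (by omega)]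
          rw [div_le_div_iff₀ (by linarith) (by push_cast; linarith)]
          push_cast
          nlinarith [hL1Δ, hΔval]
        exact (ih h (by omega)).trans hstep
  have ht2pos : (0:ℝ) < (t2:ℝ) := by exact_mod_cast (by omega : 0 < t2)
  have hfinal : f t2 < lam L2 := by
    rw [hlam L2 hL2, hf]
    exact (div_lt_div_iff_of_pos_right ht2pos).mpr (by nlinarith)
  have hstart : lam L1 = f t1 := by rw [hlam L1 hL1, hf]
  calc lam L1 = f t1 := hstart
    _ ≤ f t2 := hchain t2 ht12 le_rfl
    _ < lam L2 := hfinal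
end

section
/- Let $\mathbb{G}$ be a nonatomic congestion game where the cost of class $s$ on path $r$ is $c_{s,r}(x) = \sum_{a \in r} d_a(x_a) + t_{i_r} + \ell_{s,r}\,\lambda_{s,r}(x)$, with $d_a$ strictly increasing in the total arc flow $x_a$ and each hub price $\lambda_i$ strictly increasing in the hub's aggregated charging need $L_i(x)$ (constant prices for non-hub options). If $x$ and $y$ are both Wardrop equilibria (solutions of the variational inequality VI$(c, X)$ on the polytope $X$ of feasible flows), then $x_a = y_a$ for every arc $a$ and $L_i(x) = L_i(y)$ for every hub $i$. -/
lemma strictMono_cross_nonpos {f : ℝ → ℝ} (hf : StrictMono f) (u v : ℝ) :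
    (f u - f v) * (v - u) ≤ 0 := by
  rcases lt_trichotomy u v with h | h | h
  · have := hf h
    nlinarith
  · simp [h]
  · have := hf h
    nlinarith

lemma strictMono_cross_eq {f : ℝ → ℝ} (hf : StrictMono f) (u v : ℝ)
    (h : (f u - f v) * (v - u) = 0) : u = v := by
  rcases lt_trichotomy u v with h' | h' | h'
  · have := hf h'; nlinarith
  · exact h'
  · have := hf h'; nlinarith

/-- Proposition 2 of the paper: In the coupled
driving-and-charging congestion game, any two Wardrop equilibria (solutions
of the variational inequality VI(c, X) on the polytope of feasible flows)
induce the same flow on every arc and the same aggregated charging need at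
every hub.

Model: `ι` indexes (class, path) options, `A` the arcs, `I` the hubs.
`inc a r` says arc `a` belongs to path `r`; `hubOf r = some i` means option
`r` charges at hub `i` (otherwise the energy price `constPrice r` is
constant); `consum r` is the energy need of option `r`; `tconst r` gathers
constant cost terms. Arc flows `x_a` and hub charging needs `L i` are the
corresponding linear aggregates, and the cost of option `r` is
`c x r = ∑_{a ∈ r} d a (x_a) + tconst r + consum r * price`, with strictly
increasing `d a` and `lam i`. -/
theorem wardrop_equilibria_same_flows_and_needs
    (ι A I : Type*) [Fintype ι] [Fintype A] [Fintype I]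
    (inc : A → ι → Prop) [∀ a r, Decidable (inc a r)] [DecidableEq I]
    (hubOf : ι → Option I) (consum : ι → ℝ) (tconst : ι → ℝ)
    (constPrice : ι → ℝ)
    (d : A → ℝ → ℝ) (lam : I → ℝ → ℝ)
    (hd : ∀ a, StrictMono (d a)) (hlam : ∀ i, StrictMono (lam i))
    (arcFlow : (ι → ℝ) → A → ℝ)
    (harcFlow : ∀ x a, arcFlow x a = ∑ r, if inc a r then x r else 0)
    (Lneed : (ι → ℝ) → I → ℝ)
    (hLneed : ∀ x i, Lneed x i =
      ∑ r, (if hubOf r = some i then consum r else 0) * x r)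
    (c : (ι → ℝ) → ι → ℝ)
    (hc : ∀ x r, c x r =
      (∑ a, if inc a r then d a (arcFlow x a) else 0) + tconst r +
        consum r * (match hubOf r with
          | some i => lam i (Lneed x i)
          | none => constPrice r))
    (X : Set (ι → ℝ)) (hne : X.Nonempty) (hconv : Convex ℝ X)
    (x y : ι → ℝ) (hx : x ∈ X) (hy : y ∈ X)
    (hVIx : ∀ z ∈ X, 0 ≤ ∑ r, c x r * (z r - x r))
    (hVIy : ∀ z ∈ X, 0 ≤ ∑ r, c y r * (z r - y r)) :
    (∀ a, arcFlow x a = arcFlow y a) ∧ (∀ i, Lneed x i = Lneed y i) := by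

  -- Sum the two VI inequalities
  have hS : 0 ≤ ∑ r, (c x r - c y r) * (y r - x r) := by
    have h1 := hVIx y hy
    have h2 := hVIy x hx
    have : ∑ r, (c x r - c y r) * (y r - x r)
        = (∑ r, c x r * (y r - x r)) + (∑ r, c y r * (x r - y r)) := by
      rw [← Finset.sum_add_distrib]
      apply Finset.sum_congr rfl
      intro r _; ring
    rw [this]
    linarith
  set F : A → ℝ := fun a =>
    (d a (arcFlow x a) - d a (arcFlow y a)) * (arcFlow y a - arcFlow x a) with hF
  set G : I → ℝ := fun i =>
    (lam i (Lneed x i) - lam i (Lneed y i)) * (Lneed y i - Lneed x i) with hG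
  have key : ∑ r, (c x r - c y r) * (y r - x r) = (∑ a, F a) + (∑ i, G i) := by
    have hdiff : ∀ r, c x r - c y r =
        (∑ a, if inc a r then d a (arcFlow x a) - d a (arcFlow y a) else 0)
        + consum r * (match hubOf r with
            | some i => lam i (Lneed x i) - lam i (Lneed y i)
            | none => 0) := by
      intro r
      have hsum : (∑ a, if inc a r then d a (arcFlow x a) - d a (arcFlow y a) else 0)
          = (∑ a, if inc a r then d a (arcFlow x a) else 0)
            - (∑ a, if inc a r then d a (arcFlow y a) else 0) := by
        rw [← Finset.sum_sub_distrib]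
        exact Finset.sum_congr rfl (fun a _ => by split <;> ring)
      rw [hc, hc, hsum]
      cases h : hubOf r with
      | none => ring
      | some i => ring
    calc ∑ r, (c x r - c y r) * (y r - x r)
        = ∑ r, ((∑ a, if inc a r then
              (d a (arcFlow x a) - d a (arcFlow y a)) * (y r - x r) else 0)
            + ∑ i, (lam i (Lneed x i) - lam i (Lneed y i)) *
                ((if hubOf r = some i then consum r else 0) * (y r - x r))) := by
          apply Finset.sum_congr rfl
          intro r _
          rw [hdiff r]
          rw [add_mul, Finset.sum_mul]
          congr 1
          · exact Finset.sum_congr rfl (fun a _ => by split <;> ring)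
          · cases h : hubOf r with
            | none => simp
            | some i0 =>
                rw [Finset.sum_eq_single i0]
                · simp; ring
                · intro b _ hb
                  simp [Ne.symm hb]
                · intro h'; exact absurd (Finset.mem_univ i0) h'
      _ = (∑ a, F a) + (∑ i, G i) := by
          rw [Finset.sum_add_distrib]
          congr 1
          · rw [Finset.sum_comm]
            apply Finset.sum_congr rfl
            intro a _
            simp only [hF]
            have h2 : arcFlow y a - arcFlow x a
                = ∑ r, ((if inc a r then y r else 0) - (if inc a r then x r else 0)) := by
              rw [Finset.sum_sub_distrib, ← harcFlow, ← harcFlow]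
            rw [h2, Finset.mul_sum]
            apply Finset.sum_congr rfl
            intro r _
            split <;> ring
          · rw [Finset.sum_comm]
            apply Finset.sum_congr rfl
            intro i _
            simp only [hG]
            have h2 : Lneed y i - Lneed x i
                = ∑ r, ((if hubOf r = some i then consum r else 0) * y r
                    - (if hubOf r = some i then consum r else 0) * x r) := by
              rw [Finset.sum_sub_distrib, ← hLneed, ← hLneed]
            rw [h2, Finset.mul_sum]
            apply Finset.sum_congr rfl
            intro r _
            ring
  have hFnp : ∀ a ∈ Finset.univ, F a ≤ 0 := fun a _ =>
    strictMono_cross_nonpos (hd a) _ _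
  have hGnp : ∀ i ∈ Finset.univ, G i ≤ 0 := fun i _ =>
    strictMono_cross_nonpos (hlam i) _ _
  have hFs : ∑ a, F a ≤ 0 := Finset.sum_nonpos hFnp
  have hGs : ∑ i, G i ≤ 0 := Finset.sum_nonpos hGnp
  rw [key] at hS
  have hF0 : ∑ a, F a = 0 := le_antisymm hFs (by linarith)
  have hG0 : ∑ i, G i = 0 := le_antisymm hGs (by linarith)
  constructor
  · intro a
    have := (Finset.sum_eq_zero_iff_of_nonpos hFnp).mp hF0 a (Finset.mem_univ a)
    exact strictMono_cross_eq (hd a) _ _ this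
  · intro i
    have := (Finset.sum_eq_zero_iff_of_nonpos hGnp).mp hG0 i (Finset.mem_univ i)
    exact strictMono_cross_eq (hlam i) _ _ this
end

section
/- Let $\mathcal{A}, \mathcal{P} \subset \mathbb{R}$ be nonempty compact intervals, $\Pi_{\text{mid}}: \mathcal{A} \times \mathcal{P} \to \mathbb{R}$ continuous, $\overline{\Pi_{\text{mid}}}(P) = \max_\alpha \Pi_{\text{mid}}(\alpha, P)$, and $\varepsilon > 0$. Suppose a sequence $(P_k, \alpha_k, \overline{\alpha}_k)_{k \ge 1}$ satisfies: (a) $\overline{\alpha}_k \in \arg\max_\alpha \Pi_{\text{mid}}(\alpha, P_k)$ for all $k$, and (b) for all $k$ and all $l < k$, $\Pi_{\text{mid}}(\alpha_k, P_k) \ge \Pi_{\text{mid}}(\overline{\alpha}_l, P_k) - \varepsilon/3$. Then there exists $K$ such that $\Pi_{\text{mid}}(\alpha_K, P_K) \ge \overline{\Pi_{\text{mid}}}(P_K) - \varepsilon$. -/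
/-- Proposition 3 of the paper: convergence of the iterative
bounding algorithm. If `ᾱ k` is a best response to `P k` and the iterates
satisfy the accumulated `ε/3` constraints, then some iterate `K` reaches the
stopping criterion `Π_mid(α_K, P_K) ≥ Π̄_mid(P_K) - ε`. -/
theorem trilevel_algorithm_converges
    (a b cc dd : ℝ) (hab : a ≤ b) (hcd : cc ≤ dd)
    (Pimid : ℝ → ℝ → ℝ)
    (hPimid : ContinuousOn (fun p : ℝ × ℝ => Pimid p.1 p.2)
      (Set.Icc a b ×ˢ Set.Icc cc dd))
    (bar : ℝ → ℝ)
    (hbar : ∀ P ∈ Set.Icc cc dd,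
      IsGreatest {y : ℝ | ∃ α ∈ Set.Icc a b, y = Pimid α P} (bar P))
    (ε : ℝ) (hε : 0 < ε)
    (P : ℕ → ℝ) (α : ℕ → ℝ) (ᾱ : ℕ → ℝ)
    (hPmem : ∀ k, 1 ≤ k → P k ∈ Set.Icc cc dd)
    (hαmem : ∀ k, 1 ≤ k → α k ∈ Set.Icc a b)
    (hᾱmem : ∀ k, 1 ≤ k → ᾱ k ∈ Set.Icc a b)
    (hbest : ∀ k, 1 ≤ k → Pimid (ᾱ k) (P k) = bar (P k))
    (hconstr : ∀ k l, 1 ≤ l → l < k →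
      Pimid (α k) (P k) ≥ Pimid (ᾱ l) (P k) - ε / 3) :
    ∃ K, 1 ≤ K ∧ Pimid (α K) (P K) ≥ bar (P K) - ε := by
  have hcomp : IsCompact (Set.Icc a b ×ˢ Set.Icc cc dd) :=
    (isCompact_Icc).prod isCompact_Icc
  have hUC := hcomp.uniformContinuousOn_of_continuous hPimid
  rw [Metric.uniformContinuousOn_iff] at hUC
  obtain ⟨δ, hδ, hδ'⟩ := hUC (ε / 3) (by linarith)
  obtain ⟨c, hc, φ, hφ, hlim⟩ :=
    isCompact_Icc.tendsto_subseq (x := fun n => P (n + 1))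
      (fun n => hPmem (n + 1) (Nat.le_add_left 1 n))
  rw [Metric.tendsto_atTop] at hlim
  obtain ⟨N, hN⟩ := hlim (δ / 2) (by linarith)
  set l := φ N + 1 with hl
  set K := φ (N + 1) + 1 with hK
  have hl1 : 1 ≤ l := Nat.le_add_left 1 _
  have hK1 : 1 ≤ K := Nat.le_add_left 1 _
  have hlK : l < K := by
    have := hφ (show N < N + 1 by omega); omega
  have hPl := hPmem l hl1
  have hPK := hPmem K hK1
  have hdist : dist (P K) (P l) < δ := by
    have h1 := hN N le_rfl
    have h2 := hN (N + 1) (Nat.le_succ N)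
    simp only [Function.comp_apply] at h1 h2
    calc dist (P K) (P l) ≤ dist (P K) c + dist c (P l) := dist_triangle _ _ _
      _ < δ / 2 + δ / 2 := by rw [dist_comm c (P l)]; exact add_lt_add h2 h1
      _ = δ := by ring
  have key : ∀ α' ∈ Set.Icc a b, |Pimid α' (P K) - Pimid α' (P l)| < ε / 3 := by
    intro α' hα'
    have h := hδ' (α', P K) (Set.mk_mem_prod hα' hPK)
      (α', P l) (Set.mk_mem_prod hα' hPl)
      (by rw [Prod.dist_eq, dist_self, max_eq_right dist_nonneg]; exact hdist)
    simpa [Real.dist_eq] using h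
  have key1 := key (ᾱ l) (hᾱmem l hl1)
  have key2 := key (ᾱ K) (hᾱmem K hK1)
  rw [abs_sub_lt_iff] at key1 key2
  have hub : Pimid (ᾱ K) (P l) ≤ bar (P l) :=
    (hbar (P l) hPl).2 ⟨ᾱ K, hᾱmem K hK1, rfl⟩
  have hbl := hbest l hl1
  have hbK := hbest K hK1
  have hcon := hconstr K l hl1 hlK
  exact ⟨K, hK1, by linarith [key1.1, key1.2, key2.1, key2.2]⟩
end
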